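/- Consider the R-process with parameters r ≥ 2, ε ∈ [0,1], δ > 0 and γ = 1−(1+δ)/r. For every initial state U and every admissible strategy F, the greedy strategy F^g satisfies E[I_∞(U,F^g)] ≥ E[I_∞(U,F)]. -/

import Mathlib

open Finset Filter
open scoped ENNReal Classical

/-- State of the R-process: internal check nodes `C`, surviving edges `S`,
boundary variables `B`, internal variables `I`. -/
structure RState where
  C : ℤ
  S : ℤ
  B : ℤ
  I : ℤ

/-- A (possibly randomized) strategy: at each step it sees the history of
past `(coin, aux)` pairs together with its current auxiliary random value
(drawn i.i.d. from `aux`), and decides whether to perform a boundary step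
(`true`) or a regular step (`false`). -/
structure RStrategy where
  aux : PMF ℕ
  decide : List (Bool × ℕ) → ℕ → Bool

/-- One run of the R-process for `t` steps, driven by the stream `h` of
`(coin, aux)` pairs: the coin `true` means a regular step "extends"
(probability ε), `false` that it "prunes"; the process freezes once `S ≤ 0`. -/
def rstep (r : ℕ) (F : RStrategy) (U0 : RState) (h : ℕ → Bool × ℕ) : ℕ → RState
  | 0 => U0
  | t + 1 =>
    let cur := rstep r F U0 h t
    if cur.S ≤ 0 then cur
    else if F.decide (List.ofFn fun i : Fin t => h i) (h t).2 then
      ⟨cur.C + 1, cur.S + ((r : ℤ) - 2), cur.B - 1, cur.I + 1⟩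
    else if (h t).1 then
      ⟨cur.C + 2, cur.S + (2 * (r : ℤ) - 3), cur.B, cur.I + 1⟩
    else
      ⟨cur.C, cur.S - 1, cur.B + 1, cur.I⟩

/-- Admissibility of a strategy from initial state `U0`: along every possible
history the state always satisfies `γ r C ≤ S + B + I`. -/
def RAdmissible (r : ℕ) (γ : ℝ) (F : RStrategy) (U0 : RState) : Prop :=
  ∀ (h : ℕ → Bool × ℕ) (t : ℕ),
    γ * r * ((rstep r F U0 h t).C : ℝ) ≤
      ((rstep r F U0 h t).S : ℝ) + ((rstep r F U0 h t).B : ℝ) +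
        ((rstep r F U0 h t).I : ℝ)

/-- Product of `k` independent copies of a PMF. -/
noncomputable def pmfPi {α : Type} (p : PMF α) : (k : ℕ) → PMF (Fin k → α)
  | 0 => PMF.pure fun i => i.elim0
  | k + 1 => p.bind fun x => (pmfPi p k).map (Fin.cons x)

/-- Bernoulli PMF on `Bool` with success probability `ε` (clipped to `[0,1]`). -/
noncomputable def bern (ε : ℝ) : PMF Bool :=
  PMF.bernoulli (min (Real.toNNReal ε) 1) (min_le_right _ _)

/-- Distribution of one `(coin, aux)` pair: an independent Bernoulli(ε) coin
and an auxiliary value with law `ν`. -/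
noncomputable def coinPMF (ε : ℝ) (ν : PMF ℕ) : PMF (Bool × ℕ) :=
  (bern ε).bind fun c => ν.map fun u => (c, u)

/-- Extend a finite tuple to an infinite stream by a default value. -/
def extendFin {α : Type} (d : α) {t : ℕ} (hf : Fin t → α) : ℕ → α :=
  fun i => if h : i < t then hf ⟨i, h⟩ else d

/-- Expected total increase `E[I_∞ - I_0]` of the `I`-component of the
R-process started at `U0` under strategy `F` (the increments of `I` are
nonnegative, so this is the monotone limit of the finite-horizon
expectations). -/
noncomputable def EIinc (r : ℕ) (ε : ℝ) (F : RStrategy) (U0 : RState) : ℝ≥0∞ :=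
  ⨆ t : ℕ, ∑' hf : Fin t → Bool × ℕ,
    pmfPi (coinPMF ε F.aux) t hf *
      (((rstep r F U0 (extendFin (false, 0) hf) t).I - U0.I).toNat : ℝ≥0∞)

/-- One step of the greedy replay used to define the greedy strategy. -/
noncomputable def greedyStep (r : ℕ) (δ : ℝ) (st : RState) (x : Bool × ℕ) : RState :=
  if st.S ≤ 0 then st
  else if (1 - (1 + δ) / r) * r * (st.C : ℝ) ≤
      (st.S : ℝ) + (st.B : ℝ) + (st.I : ℝ) - (1 - δ) then
    ⟨st.C + 1, st.S + ((r : ℤ) - 2), st.B - 1, st.I + 1⟩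
  else if x.1 then
    ⟨st.C + 2, st.S + (2 * (r : ℤ) - 3), st.B, st.I + 1⟩
  else
    ⟨st.C, st.S - 1, st.B + 1, st.I⟩

/-- The greedy strategy `F^g` (for `γ = 1 - (1+δ)/r`): perform a boundary step
exactly when `γ r C ≤ S + B + I - (1-δ)` holds for the current state (which it
recomputes by replaying the history). -/
noncomputable def greedy (r : ℕ) (δ : ℝ) (U0 : RState) : RStrategy where
  aux := PMF.pure 0
  decide hist _ :=
    let st := hist.foldl (greedyStep r δ) U0
    if (1 - (1 + δ) / r) * r * (st.C : ℝ) ≤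
        (st.S : ℝ) + (st.B : ℝ) + (st.I : ℝ) - (1 - δ) then true else false

/-!
Let `V n` be the `n`-step value of the greedy strategy, computed by its Bellman recursion
(`greedyValue`). Wherever the greedy condition holds, a boundary step is worth at least as much
as a regular one: regular steps preserve the greedy condition and commute with boundary steps, so
by induction on the horizon a regular step followed by a boundary step is dominated by the
boundary step followed by the regular one. Admissibility lets a strategy take a boundary step
only where the greedy condition holds, so by dynamic programming its expected `n`-step gain is at
most `V n`, which the greedy strategy attains.
-/

namespace PMF

variable {α β : Type*}

lemma tsum_bind_mul (m : PMF α) (k : α → PMF β) (W : β → ℝ≥0∞) :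
    ∑' y, m.bind k y * W y = ∑' a, m a * ∑' y, k a y * W y := by
  simp only [bind_apply, ← ENNReal.tsum_mul_right, ← ENNReal.tsum_mul_left, mul_assoc]
  exact ENNReal.tsum_comm

lemma tsum_pure_mul (a : α) (W : α → ℝ≥0∞) : ∑' y, PMF.pure a y * W y = W a := by
  rw [tsum_eq_single a fun y hy => by simp [hy]]
  simp

lemma tsum_map_mul (m : PMF α) (f : α → β) (W : β → ℝ≥0∞) :
    ∑' y, m.map f y * W y = ∑' a, m a * W (f a) := by
  simp only [← bind_pure_comp, tsum_bind_mul, Function.comp_apply, tsum_pure_mul]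

lemma apply_false_eq_one_sub (q : PMF Bool) : q false = 1 - q true := by
  have h := q.tsum_coe
  rw [tsum_bool] at h
  exact ENNReal.eq_sub_of_add_eq (q.apply_ne_top true) h

end PMF

lemma tsum_pmfPi_succ_mul {α : Type} (μ : PMF α) (t : ℕ) (f : (Fin (t + 1) → α) → ℝ≥0∞) :
    ∑' v, pmfPi μ (t + 1) v * f v = ∑' x, μ x * ∑' v, pmfPi μ t v * f (Fin.cons x v) := by
  simp only [pmfPi, PMF.tsum_bind_mul, PMF.tsum_map_mul]

lemma tsum_coinPMF_mul (ε : ℝ) (ν : PMF ℕ) (H : Bool × ℕ → ℝ≥0∞) :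
    ∑' x, coinPMF ε ν x * H x =
      ∑' u, ν u * (bern ε true * H (true, u) + (1 - bern ε true) * H (false, u)) := by
  rw [coinPMF, PMF.tsum_bind_mul, tsum_bool]
  simp only [PMF.tsum_map_mul, (bern ε).apply_false_eq_one_sub, ← ENNReal.tsum_mul_left,
    ← ENNReal.tsum_add]
  exact tsum_congr fun u => by ring

lemma one_sub_div_mul_cancel {K : Type*} [Field K] (a : K) {b : K} (hb : b ≠ 0) :
    (1 - a / b) * b = b - a := by
  rw [one_sub_div hb, div_mul_cancel₀ _ hb]

namespace RState

def boundaryStep (r : ℕ) (U : RState) : RState := ⟨U.C + 1, U.S + ((r : ℤ) - 2), U.B - 1, U.I + 1⟩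

def extendStep (r : ℕ) (U : RState) : RState := ⟨U.C + 2, U.S + (2 * (r : ℤ) - 3), U.B, U.I + 1⟩

def pruneStep (U : RState) : RState := ⟨U.C, U.S - 1, U.B + 1, U.I⟩

lemma boundaryStep_extendStep (r : ℕ) (U : RState) :
    (U.extendStep r).boundaryStep r = (U.boundaryStep r).extendStep r := by
  simp only [boundaryStep, extendStep, mk.injEq, and_true]
  omega

lemma boundaryStep_pruneStep (r : ℕ) (U : RState) :
    U.pruneStep.boundaryStep r = (U.boundaryStep r).pruneStep := by
  simp only [boundaryStep, pruneStep, mk.injEq, true_and, and_true]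
  omega

end RState

def GreedyCond (r : ℕ) (δ : ℝ) (U : RState) : Prop :=
  (1 - (1 + δ) / r) * r * (U.C : ℝ) ≤ (U.S : ℝ) + (U.B : ℝ) + (U.I : ℝ) - (1 - δ)

section GreedyCond

variable {r : ℕ} {δ : ℝ} {U : RState}

lemma GreedyCond.extendStep (hr : r ≠ 0) (hδ : 0 ≤ δ) (h : GreedyCond r δ U) :
    GreedyCond r δ (U.extendStep r) := by
  unfold GreedyCond at *
  rw [one_sub_div_mul_cancel _ (Nat.cast_ne_zero.mpr hr)] at *
  simp only [RState.extendStep]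
  push_cast
  linarith

lemma GreedyCond.pruneStep (h : GreedyCond r δ U) : GreedyCond r δ U.pruneStep := by
  unfold GreedyCond at *
  simp only [RState.pruneStep]
  push_cast
  linarith

end GreedyCond

noncomputable def regularValue (r : ℕ) (p : ℝ≥0∞) (V : RState → ℝ≥0∞) (U : RState) : ℝ≥0∞ :=
  p * (1 + V (U.extendStep r)) + (1 - p) * V U.pruneStep

noncomputable def greedyValue (r : ℕ) (δ : ℝ) (p : ℝ≥0∞) : ℕ → RState → ℝ≥0∞
  | 0, _ => 0
  | n + 1, U =>
    if U.S ≤ 0 then 0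
    else if GreedyCond r δ U then 1 + greedyValue r δ p n (U.boundaryStep r)
    else regularValue r p (greedyValue r δ p n) U

section greedyValue

variable {r : ℕ} {δ : ℝ} {p : ℝ≥0∞}

lemma greedyValue_succ_le_of_greedyCond {n : ℕ} {U : RState} (h : GreedyCond r δ U) :
    greedyValue r δ p (n + 1) U ≤ 1 + greedyValue r δ p n (U.boundaryStep r) := by
  rw [greedyValue, if_pos h]
  split_ifs
  exacts [zero_le, le_rfl]

theorem regularValue_le_greedyValue_succ (hr : 2 ≤ r) (hδ : 0 ≤ δ) (hp : p ≤ 1) (n : ℕ)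
    {U : RState} (hS : 0 < U.S) :
    regularValue r p (greedyValue r δ p n) U ≤ greedyValue r δ p (n + 1) U := by
  induction n generalizing U with
  | zero =>
    rw [greedyValue]
    split_ifs
    · omega
    · simpa [regularValue, greedyValue] using hp
    · exact le_rfl
  | succ m ih =>
    rw [greedyValue, if_neg (by omega)]
    split_ifs with hc
    · have hbS : 0 < (U.boundaryStep r).S := by simp only [RState.boundaryStep]; omega
      calc regularValue r p (greedyValue r δ p (m + 1)) U
          ≤ p * (1 + (1 + greedyValue r δ p m ((U.boundaryStep r).extendStep r)))
              + (1 - p) * (1 + greedyValue r δ p m ((U.boundaryStep r).pruneStep)) := by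
            rw [regularValue, ← RState.boundaryStep_extendStep, ← RState.boundaryStep_pruneStep]
            gcongr
            exacts [greedyValue_succ_le_of_greedyCond (hc.extendStep (by omega) hδ),
              greedyValue_succ_le_of_greedyCond hc.pruneStep]
        _ = (p + (1 - p)) + regularValue r p (greedyValue r δ p m) (U.boundaryStep r) := by
            rw [regularValue]; ring
        _ ≤ 1 + greedyValue r δ p (m + 1) (U.boundaryStep r) := by
            rw [add_tsub_cancel_of_le hp]
            gcongr
            exact ih hbS
    · exact le_rfl

end greedyValue

def RStrategy.shift (F : RStrategy) (x : Bool × ℕ) : RStrategy :=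
  ⟨F.aux, fun l u => F.decide (x :: l) u⟩

def streamCons {α : Type} (x : α) (h : ℕ → α) : ℕ → α
  | 0 => x
  | i + 1 => h i

def nextState (r : ℕ) (F : RStrategy) (U : RState) (x : Bool × ℕ) : RState :=
  if U.S ≤ 0 then U
  else if F.decide [] x.2 then U.boundaryStep r
  else if x.1 then U.extendStep r else U.pruneStep

section Trajectory

variable {r : ℕ} {F : RStrategy} {U : RState}

lemma rstep_succ_cons (x : Bool × ℕ) (h : ℕ → Bool × ℕ) (t : ℕ) :
    rstep r F U (streamCons x h) (t + 1) = rstep r (F.shift x) (nextState r F U x) h t := by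
  induction t with
  | zero => rfl
  | succ t ih =>
    conv_lhs => rw [rstep]
    conv_rhs => rw [rstep]
    rw [ih, List.ofFn_succ]
    rfl

lemma rstep_of_S_nonpos (h : ℕ → Bool × ℕ) (hS : U.S ≤ 0) (t : ℕ) : rstep r F U h t = U := by
  induction t with
  | zero => rfl
  | succ t ih => rw [rstep, ih, if_pos hS]

lemma le_rstep_I (h : ℕ → Bool × ℕ) (t : ℕ) : U.I ≤ (rstep r F U h t).I := by
  induction t with
  | zero => exact le_rfl
  | succ t ih =>
    rw [rstep]
    split_ifs <;> grind

lemma le_nextState_I (x : Bool × ℕ) : U.I ≤ (nextState r F U x).I := by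
  unfold nextState RState.boundaryStep RState.extendStep RState.pruneStep
  split_ifs <;> grind

lemma extendFin_cons {α : Type} (d : α) {t : ℕ} (x : α) (v : Fin t → α) :
    extendFin d (Fin.cons x v : Fin (t + 1) → α) = streamCons x (extendFin d v) := by
  funext i
  cases i with
  | zero => rfl
  | succ i =>
    simp only [extendFin, streamCons, Nat.succ_lt_succ_iff]
    split_ifs <;> rfl

lemma RAdmissible.shift {γ : ℝ} (hadm : RAdmissible r γ F U) (x : Bool × ℕ) :
    RAdmissible r γ (F.shift x) (nextState r F U x) := fun h t => by
  have h' := hadm (streamCons x h) (t + 1)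
  rwa [rstep_succ_cons] at h'

lemma RAdmissible.greedyCond {δ γ : ℝ} (hr : r ≠ 0) (hγ : γ = 1 - (1 + δ) / r)
    (hadm : RAdmissible r γ F U) (hS : ¬ U.S ≤ 0) {u : ℕ} (hd : F.decide [] u) :
    GreedyCond r δ U := by
  have h := hadm (streamCons (true, u) fun _ => (true, u)) (0 + 1)
  rw [rstep_succ_cons] at h
  simp only [rstep, nextState, if_neg hS, hd, if_true, RState.boundaryStep] at h
  unfold GreedyCond
  subst hγ
  rw [one_sub_div_mul_cancel _ (Nat.cast_ne_zero.mpr hr)] at h ⊢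
  push_cast at h
  linarith

end Trajectory

def gainI (U W : RState) : ℝ≥0∞ := ((W.I - U.I).toNat : ℝ≥0∞)

lemma gainI_add {U V W : RState} (hUV : U.I ≤ V.I) (hVW : V.I ≤ W.I) :
    gainI U W = gainI U V + gainI V W := by
  unfold gainI
  rw [← Nat.cast_add]
  congr 1
  omega

noncomputable def EIincUpTo (r : ℕ) (ε : ℝ) (F : RStrategy) (U : RState) (t : ℕ) : ℝ≥0∞ :=
  ∑' v : Fin t → Bool × ℕ,
    pmfPi (coinPMF ε F.aux) t v * gainI U (rstep r F U (extendFin (false, 0) v) t)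

section EIincUpTo

variable {r : ℕ} {ε : ℝ} {F : RStrategy} {U : RState}

lemma EIincUpTo_of_S_nonpos (hS : U.S ≤ 0) (t : ℕ) : EIincUpTo r ε F U t = 0 := by
  simp [EIincUpTo, rstep_of_S_nonpos _ hS, gainI]

lemma EIincUpTo_succ (t : ℕ) :
    EIincUpTo r ε F U (t + 1) = ∑' x, coinPMF ε F.aux x *
      (gainI U (nextState r F U x) + EIincUpTo r ε (F.shift x) (nextState r F U x) t) := by
  rw [EIincUpTo, tsum_pmfPi_succ_mul]
  refine tsum_congr fun x => congrArg _ ?_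
  simp only [extendFin_cons, rstep_succ_cons]
  rw [EIincUpTo]
  simp only [gainI_add (le_nextState_I x) (le_rstep_I _ _), mul_add, ENNReal.tsum_add,
    ENNReal.tsum_mul_right, PMF.tsum_coe, one_mul]
  rfl

end EIincUpTo

lemma tsum_coinPMF_mul_nextState (ε : ℝ) (r : ℕ) (F : RStrategy) {U : RState} (hS : ¬ U.S ≤ 0)
    (V : RState → ℝ≥0∞) :
    ∑' x, coinPMF ε F.aux x * (gainI U (nextState r F U x) + V (nextState r F U x)) =
      ∑' u, F.aux u * if F.decide [] u then 1 + V (U.boundaryStep r)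
        else regularValue r (bern ε true) V U := by
  rw [tsum_coinPMF_mul]
  refine tsum_congr fun u => congrArg _ ?_
  by_cases hd : F.decide [] u
  · simp only [nextState, if_neg hS, hd, if_true, gainI, RState.boundaryStep]
    simp [← add_mul, add_tsub_cancel_of_le (PMF.coe_le_one _ _)]
  · simp [nextState, hS, hd, gainI, regularValue, RState.extendStep, RState.pruneStep]

theorem EIincUpTo_le_greedyValue {r : ℕ} (hr : 2 ≤ r) {δ γ : ℝ} (hδ : 0 ≤ δ)
    (hγ : γ = 1 - (1 + δ) / r) (ε : ℝ) (t : ℕ) (F : RStrategy) (U : RState)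
    (hadm : RAdmissible r γ F U) :
    EIincUpTo r ε F U t ≤ greedyValue r δ (bern ε true) t U := by
  induction t generalizing F U with
  | zero => simp [EIincUpTo, rstep, gainI]
  | succ t ih =>
    by_cases hS : U.S ≤ 0
    · rw [EIincUpTo_of_S_nonpos hS]
      exact zero_le
    calc EIincUpTo r ε F U (t + 1)
        ≤ ∑' x, coinPMF ε F.aux x * (gainI U (nextState r F U x)
            + greedyValue r δ (bern ε true) t (nextState r F U x)) := by
          rw [EIincUpTo_succ]
          gcongr with x
          exact ih _ _ (hadm.shift x)
      _ ≤ ∑' u, F.aux u * greedyValue r δ (bern ε true) (t + 1) U := by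
          rw [tsum_coinPMF_mul_nextState ε r F hS]
          gcongr with u
          split_ifs with hd
          · rw [greedyValue, if_neg hS, if_pos (hadm.greedyCond (by omega) hγ hS hd)]
          · exact regularValue_le_greedyValue_succ hr hδ (PMF.coe_le_one _ _) t (by omega)
      _ = greedyValue r δ (bern ε true) (t + 1) U := by
          rw [ENNReal.tsum_mul_right, PMF.tsum_coe, one_mul]

lemma greedy_decide_nil (r : ℕ) (δ : ℝ) (W : RState) (u : ℕ) :
    (greedy r δ W).decide [] u = true ↔ GreedyCond r δ W := by
  show (if GreedyCond r δ W then true else false) = true ↔ _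
  split_ifs with h <;> simpa

lemma nextState_greedy (r : ℕ) (δ : ℝ) (W : RState) (x : Bool × ℕ) :
    nextState r (greedy r δ W) W x = greedyStep r δ W x := by
  unfold nextState greedyStep
  simp only [greedy_decide_nil]
  rfl

theorem greedyValue_le_EIincUpTo_greedy (r : ℕ) (δ ε : ℝ) (t : ℕ) (W : RState) :
    greedyValue r δ (bern ε true) t W ≤ EIincUpTo r ε (greedy r δ W) W t := by
  induction t generalizing W with
  | zero => exact zero_le
  | succ t ih =>
    by_cases hS : W.S ≤ 0
    · rw [greedyValue, if_pos hS]
      exact zero_le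
    calc greedyValue r δ (bern ε true) (t + 1) W
        = ∑' u, (greedy r δ W).aux u * greedyValue r δ (bern ε true) (t + 1) W := by
          rw [ENNReal.tsum_mul_right, PMF.tsum_coe, one_mul]
      _ = ∑' x, coinPMF ε (greedy r δ W).aux x * (gainI W (nextState r (greedy r δ W) W x)
            + greedyValue r δ (bern ε true) t (nextState r (greedy r δ W) W x)) := by
          simp only [tsum_coinPMF_mul_nextState ε r _ hS, greedy_decide_nil, greedyValue,
            if_neg hS]
      _ ≤ EIincUpTo r ε (greedy r δ W) W (t + 1) := by
          rw [EIincUpTo_succ]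
          gcongr with x
          rw [nextState_greedy]
          exact ih _

theorem stmt11_general (r : ℕ) (hr : 2 ≤ r) (ε : ℝ)
    (δ : ℝ) (hδ : 0 < δ) (γ : ℝ) (hγ : γ = 1 - (1 + δ) / r)
    (U : RState) (F : RStrategy) (hadm : RAdmissible r γ F U) :
    EIinc r ε F U ≤ EIinc r ε (greedy r δ U) U :=
  iSup_mono fun t => (EIincUpTo_le_greedyValue hr hδ.le hγ ε t F U hadm).trans
    (greedyValue_le_EIincUpTo_greedy r δ ε t U)

/-- the greedy strategy dominates every admissible strategy:
for every initial state `U` and admissible strategy `F`,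
`E[I_∞(U,F^g)] ≥ E[I_∞(U,F)]` (the initial `I`-values agree, so it suffices
to compare the expected increments). -/
theorem stmt11 (r : ℕ) (hr : 2 ≤ r) (ε : ℝ) (hε0 : 0 ≤ ε) (hε1 : ε ≤ 1)
    (δ : ℝ) (hδ : 0 < δ) (γ : ℝ) (hγ : γ = 1 - (1 + δ) / r)
    (U : RState) (F : RStrategy) (hadm : RAdmissible r γ F U) :
    EIinc r ε F U ≤ EIinc r ε (greedy r δ U) U :=
  stmt11_general r hr ε δ hδ γ hγ U F hadm
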